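/- arXiv:2010.01604 — 3 statements merged into one kernel-verified Lean document; each statement's English description precedes it below -/
import Mathlib

section
/- Let Q ∈ [0,H]^{A×B} and let π ∈ Δ_{A×B} be a distribution over joint actions satisfying: E_{(a,b)∼π} Q(a,b) ≥ max_{a*} E_{(a,b)∼π} Q(a*,b) and E_{(a,b)∼π} Q(a,b) ≤ min_{b*} E_{(a,b)∼π} Q(a,b*). Let μ and ν be the marginal distributions of π over the first and second coordinates respectively. Then max_{a*} E_{b∼ν} Q(a*,b) = min_{b*} E_{a∼μ} Q(a,b*), i.e., (μ,ν) is a Nash equilibrium of the zero-sum matrix game with payoff Q. -/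
open scoped BigOperators

/-- if `π` is a coarse correlated equilibrium of the zero-sum game `(Q, Q)`,
then its marginals `(μ, ν)` form a Nash equilibrium of the zero-sum matrix game with
payoff `Q`: the max-player's best-response value against `ν` equals the min-player's
best-response value against `μ`. -/
theorem cce_marginals_nash (A B : ℕ) (hA : 0 < A) (hB : 0 < B) (H : ℝ)
    (Q : Fin A → Fin B → ℝ) (hQ : ∀ a b, Q a b ∈ Set.Icc (0 : ℝ) H)
    (π : Fin A → Fin B → ℝ)
    (hπ0 : ∀ a b, 0 ≤ π a b) (hπ1 : ∑ a, ∑ b, π a b = 1)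
    (hup : ∀ astar : Fin A,
      ∑ a, ∑ b, π a b * Q astar b ≤ ∑ a, ∑ b, π a b * Q a b)
    (hlow : ∀ bstar : Fin B,
      ∑ a, ∑ b, π a b * Q a b ≤ ∑ a, ∑ b, π a b * Q a bstar) :
    (⨆ astar : Fin A, ∑ b, (∑ a, π a b) * Q astar b) =
      ⨅ bstar : Fin B, ∑ a, (∑ b, π a b) * Q a bstar := by
  haveI : Nonempty (Fin A) := ⟨⟨0, hA⟩⟩
  haveI : Nonempty (Fin B) := ⟨⟨0, hB⟩⟩
  set f : Fin A → ℝ := fun astar => ∑ b, (∑ a, π a b) * Q astar b with hf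
  set g : Fin B → ℝ := fun bstar => ∑ a, (∑ b, π a b) * Q a bstar with hg
  set V : ℝ := ∑ a, ∑ b, π a b * Q a b with hV
  have hfV : ∀ astar, f astar ≤ V := by
    intro astar
    have : f astar = ∑ a, ∑ b, π a b * Q astar b := by
      simp only [hf, Finset.sum_mul]
      rw [Finset.sum_comm]
    rw [this]; exact hup astar
  have hVg : ∀ bstar, V ≤ g bstar := by
    intro bstar
    have : g bstar = ∑ a, ∑ b, π a b * Q a bstar := by
      simp only [hg, Finset.sum_mul]
    rw [this]; exact hlow bstar
  have hbddf : BddAbove (Set.range f) := Set.Finite.bddAbove (Set.finite_range f)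
  have hbddg : BddBelow (Set.range g) := Set.Finite.bddBelow (Set.finite_range g)
  have hsup_le : (⨆ astar, f astar) ≤ V := ciSup_le hfV
  have hle_inf : V ≤ ⨅ bstar, g bstar := le_ciInf hVg
  -- mixed value of product of marginals
  set S : ℝ := ⨆ astar, f astar with hS
  set I : ℝ := ⨅ bstar, g bstar with hI
  set W : ℝ := ∑ a, (∑ b, π a b) * (∑ b, (∑ a', π a' b) * Q a b) with hW
  have hmu0 : ∀ a, 0 ≤ ∑ b, π a b := fun a => Finset.sum_nonneg fun b _ => hπ0 a b
  have hnu0 : ∀ b, 0 ≤ ∑ a, π a b := fun b => Finset.sum_nonneg fun a _ => hπ0 a b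
  have hmu1 : ∑ a, (∑ b, π a b) = 1 := hπ1
  have hnu1 : ∑ b, (∑ a, π a b) = 1 := by rw [Finset.sum_comm]; exact hπ1
  have hWS : W ≤ S := by
    calc W ≤ ∑ a, (∑ b, π a b) * S := by
            apply Finset.sum_le_sum
            intro a _
            exact mul_le_mul_of_nonneg_left (le_ciSup hbddf a) (hmu0 a)
      _ = S := by rw [← Finset.sum_mul, hmu1, one_mul]
  have hIW : I ≤ W := by
    have hWalt : W = ∑ b, (∑ a, π a b) * g b := by
      simp only [hW, hg, Finset.mul_sum]
      rw [Finset.sum_comm]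
      refine Finset.sum_congr rfl fun b _ => Finset.sum_congr rfl fun a _ => by ring
    rw [hWalt]
    calc I = ∑ b, (∑ a, π a b) * I := by rw [← Finset.sum_mul, hnu1, one_mul]
      _ ≤ ∑ b, (∑ a, π a b) * g b := by
            apply Finset.sum_le_sum
            intro b _
            exact mul_le_mul_of_nonneg_left (ciInf_le hbddg b) (hnu0 b)
  exact le_antisymm (hsup_le.trans hle_inf) (hIW.trans hWS)
end

section
/- Let P, P̂ be probability distributions on a finite set S, V*, V_up, V_low : S → [0,H] with |g(s)| ≤ (V_up − V_low)(s) for all s, and suppose for every s' ∈ S that |P̂(s') − P(s')| ≤ √(P̂(s')·ι/n) + ι/n for some ι, n > 0. Then |∑_{s'} (P̂−P)(s') g(s')| ≤ (1/H)·∑_{s'} P̂(s')·(V_up−V_low)(s') + (H/4 + 1)·H·|S|·ι/n. -/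
open scoped BigOperators

/-- lower-order term control. If `|g| ≤ V_up - V_low ≤ H` pointwise and
`|P̂(s') - P(s')| ≤ √(P̂(s')·ι/n) + ι/n` for every `s'`, then
`|∑_{s'} (P̂ - P)(s') g(s')| ≤ (1/H)·∑_{s'} P̂(s')(V_up - V_low)(s') + (H/4 + 1)·H·|S|·ι/n`. -/
theorem lower_order_term_control {σ : Type*} [Fintype σ] (H ι n : ℝ)
    (hH : 0 < H) (hι : 0 < ι) (hn : 0 < n)
    (P Phat : σ → ℝ)
    (hP0 : ∀ s, 0 ≤ P s) (hP1 : ∑ s, P s = 1)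
    (hPhat0 : ∀ s, 0 ≤ Phat s) (hPhat1 : ∑ s, Phat s = 1)
    (Vup Vlow g : σ → ℝ)
    (hV : ∀ s, 0 ≤ Vlow s ∧ Vlow s ≤ Vup s ∧ Vup s ≤ H)
    (hg : ∀ s, |g s| ≤ Vup s - Vlow s)
    (hconc : ∀ s', |Phat s' - P s'| ≤ Real.sqrt (Phat s' * ι / n) + ι / n) :
    |∑ s', (Phat s' - P s') * g s'|
      ≤ (1 / H) * (∑ s', Phat s' * (Vup s' - Vlow s'))
        + (H / 4 + 1) * H * (Fintype.card σ : ℝ) * ι / n := by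
  have hc : 0 < ι / n := by positivity
  have key : ∀ s, |(Phat s - P s) * g s|
      ≤ (1 / H) * (Phat s * (Vup s - Vlow s)) + (H / 4 + 1) * H * (ι / n) := by
    intro s
    obtain ⟨h1, h2, h3⟩ := hV s
    have hd0 : 0 ≤ Vup s - Vlow s := by linarith
    have hdH : Vup s - Vlow s ≤ H := by linarith
    have ha : 0 ≤ Phat s := hPhat0 s
    have hinv : H * H⁻¹ = 1 := mul_inv_cancel₀ hH.ne'
    have hsq : Real.sqrt (Phat s * ι / n) ≤ Phat s / H + H * (ι / n) / 4 := by
      have hrhs : 0 ≤ Phat s / H + H * (ι / n) / 4 := by positivity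
      have hle : Phat s * ι / n ≤ (Phat s / H + H * (ι / n) / 4) ^ 2 := by
        have hexp : (Phat s / H + H * (ι / n) / 4) ^ 2
            = (Phat s / H - H * (ι / n) / 4) ^ 2 + Phat s * ι / n := by
          field_simp
          ring
        have := sq_nonneg (Phat s / H - H * (ι / n) / 4)
        linarith
      calc Real.sqrt (Phat s * ι / n) ≤ Real.sqrt ((Phat s / H + H * (ι / n) / 4) ^ 2) :=
            Real.sqrt_le_sqrt hle
        _ = Phat s / H + H * (ι / n) / 4 := Real.sqrt_sq hrhs
    calc |(Phat s - P s) * g s| = |Phat s - P s| * |g s| := abs_mul _ _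
      _ ≤ (Real.sqrt (Phat s * ι / n) + ι / n) * (Vup s - Vlow s) :=
          mul_le_mul (hconc s) (hg s) (abs_nonneg _)
            (by positivity)
      _ ≤ (Phat s / H + H * (ι / n) / 4 + ι / n) * (Vup s - Vlow s) := by
          apply mul_le_mul_of_nonneg_right _ hd0
          linarith [hsq]
      _ ≤ (1 / H) * (Phat s * (Vup s - Vlow s)) + (H / 4 + 1) * H * (ι / n) := by
          have hprod : 0 ≤ (H * (ι / n) / 4 + ι / n) * (H - (Vup s - Vlow s)) :=
            mul_nonneg (by positivity) (by linarith)
          have heq : (Phat s / H) * (Vup s - Vlow s)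
              = (1 / H) * (Phat s * (Vup s - Vlow s)) := by ring
          nlinarith [hprod, heq]
  calc |∑ s', (Phat s' - P s') * g s'| ≤ ∑ s', |(Phat s' - P s') * g s'| :=
        Finset.abs_sum_le_sum_abs _ _
    _ ≤ ∑ s', ((1 / H) * (Phat s' * (Vup s' - Vlow s')) + (H / 4 + 1) * H * (ι / n)) :=
        Finset.sum_le_sum fun s _ => key s
    _ = (1 / H) * (∑ s', Phat s' * (Vup s' - Vlow s'))
        + (H / 4 + 1) * H * (Fintype.card σ : ℝ) * ι / n := by
        rw [Finset.sum_add_distrib, ← Finset.mul_sum, Finset.sum_const, Finset.card_univ,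
          nsmul_eq_mul]
        ring
end

section
/- Let Q_up, Q_low ∈ [0,H]^{A×B} and suppose π ∈ Δ_{A×B} satisfies the CCE conditions: E_π Q_up ≥ max_{a*} E_{(a,b)∼π} Q_up(a*,b) and E_π Q_low ≤ min_{b*} E_{(a,b)∼π} Q_low(a,b*). If additionally Q_up(a,b) − Q_low(a,b) ≤ δ for all (a,b), then the marginals (μ,ν) of π form a 2δ-approximate Nash equilibrium of the zero-sum game with payoff Q_low (and of Q_up): max_{a*} E_{b∼ν} Q_low(a*,b) − min_{b*} E_{a∼μ} Q_low(a,b*) ≤ 2δ. -/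
open scoped BigOperators

/-- if `π` satisfies the CCE conditions for the pair `(Q_up, Q_low)` and
`Q_low ≤ Q_up ≤ Q_low + δ` entrywise, then the marginals `(μ, ν)` of `π` form a
`2δ`-approximate Nash equilibrium of the zero-sum game with payoff `Q_low`. -/
theorem cce_close_bounds_approx_nash (A B : ℕ) (hA : 0 < A) (hB : 0 < B)
    (H δ : ℝ)
    (Qup Qlow : Fin A → Fin B → ℝ)
    (hbound : ∀ a b, Qlow a b ∈ Set.Icc (0 : ℝ) H ∧ Qup a b ∈ Set.Icc (0 : ℝ) H)
    (hle : ∀ a b, Qlow a b ≤ Qup a b)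
    (hgap : ∀ a b, Qup a b - Qlow a b ≤ δ)
    (π : Fin A → Fin B → ℝ)
    (hπ0 : ∀ a b, 0 ≤ π a b) (hπ1 : ∑ a, ∑ b, π a b = 1)
    (hup : ∀ astar : Fin A,
      ∑ a, ∑ b, π a b * Qup astar b ≤ ∑ a, ∑ b, π a b * Qup a b)
    (hlow : ∀ bstar : Fin B,
      ∑ a, ∑ b, π a b * Qlow a b ≤ ∑ a, ∑ b, π a b * Qlow a bstar) :
    (⨆ astar : Fin A, ∑ b, (∑ a, π a b) * Qlow astar b)
      - (⨅ bstar : Fin B, ∑ a, (∑ b, π a b) * Qlow a bstar) ≤ 2 * δ := by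
  haveI : Nonempty (Fin A) := ⟨⟨0, hA⟩⟩
  haveI : Nonempty (Fin B) := ⟨⟨0, hB⟩⟩
  have hδ : 0 ≤ δ := by
    have h1 := hle ⟨0, hA⟩ ⟨0, hB⟩
    have h2 := hgap ⟨0, hA⟩ ⟨0, hB⟩
    linarith
  rw [sub_le_iff_le_add]
  apply ciSup_le
  intro astar
  rw [← sub_le_iff_le_add']
  apply le_ciInf
  intro bstar
  rw [sub_le_iff_le_add']
  -- key chain
  have key : ∑ b, (∑ a, π a b) * Qlow astar b ≤
      (∑ a, (∑ b, π a b) * Qlow a bstar) + δ := by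
    have e1 : ∑ b, (∑ a, π a b) * Qlow astar b
        = ∑ a, ∑ b, π a b * Qlow astar b := by
      rw [Finset.sum_comm]
      simp [Finset.sum_mul]
    have e2 : ∑ a, (∑ b, π a b) * Qlow a bstar
        = ∑ a, ∑ b, π a b * Qlow a bstar := by
      simp [Finset.sum_mul]
    rw [e1, e2]
    have s1 : ∑ a, ∑ b, π a b * Qlow astar b ≤ ∑ a, ∑ b, π a b * Qup astar b := by
      apply Finset.sum_le_sum; intro a _
      apply Finset.sum_le_sum; intro b _
      exact mul_le_mul_of_nonneg_left (hle astar b) (hπ0 a b)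
    have s2 := hup astar
    have s3 : ∑ a, ∑ b, π a b * Qup a b ≤ (∑ a, ∑ b, π a b * Qlow a b) + δ := by
      have : ∑ a, ∑ b, π a b * Qup a b - ∑ a, ∑ b, π a b * Qlow a b
          = ∑ a, ∑ b, π a b * (Qup a b - Qlow a b) := by
        rw [← Finset.sum_sub_distrib]
        congr 1; ext a
        rw [← Finset.sum_sub_distrib]
        congr 1; ext b; ring
      have hb : ∑ a, ∑ b, π a b * (Qup a b - Qlow a b) ≤ ∑ a, ∑ b, π a b * δ := by
        apply Finset.sum_le_sum; intro a _
        apply Finset.sum_le_sum; intro b _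
        exact mul_le_mul_of_nonneg_left (hgap a b) (hπ0 a b)
      have hδsum : ∑ a, ∑ b, π a b * δ = δ := by
        simp only [← Finset.sum_mul]
        rw [hπ1, one_mul]
      linarith
    have s4 := hlow bstar
    linarith
  linarith
end
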